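/- arXiv:2103.11550 — 3 statements merged into one kernel-verified Lean document; each statement's English description precedes it below -/
import Mathlib

section
/- Let G be a simple graph on n vertices with at least one edge, let S be a proper subset of V(G), and let X and Y be disjoint nonempty vertex subsets with X ∪ Y = V(G) − S, |X| ≤ |Y|, and no edge of G joining a vertex of X to a vertex of Y. Then 2·μₙ(G)·|X| ≤ (μₙ(G) − μ₂(G))·n. -/
namespace Paper

variable {V : Type*}

/-- The eigenvalues of the Laplacian matrix of `G`, listed in nondecreasing order
(with multiplicity), indexed by `Fin (Fintype.card V)`. -/
noncomputable def lapEig [Fintype V] (G : SimpleGraph V) : Fin (Fintype.card V) → ℝ :=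
  letI := Classical.decEq V
  letI : DecidableRel G.Adj := Classical.decRel _
  let f : Fin (Fintype.card V) → ℝ :=
    (SimpleGraph.posSemidef_lapMatrix ℝ G).isHermitian.eigenvalues ∘ (Fintype.equivFin V).symm
  f ∘ Tuple.sort f

/-- `mu G i` is the `i`-th smallest Laplacian eigenvalue of `G` (1-indexed),
so `mu G 2 = μ₂` and `mu G n = μₙ` when `G` has `n` vertices. -/
noncomputable def mu [Fintype V] (G : SimpleGraph V) (i : ℕ) : ℝ :=
  if h : i - 1 < Fintype.card V then lapEig G ⟨i - 1, h⟩ else 0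

/-- The matching number of `G`: the maximum size of a matching. -/
noncomputable def matchingNumber [Fintype V] (G : SimpleGraph V) : ℕ :=
  sSup {k | ∃ M : G.Subgraph, M.IsMatching ∧ M.edgeSet.ncard = k}

/-- Number of odd components (components with an odd number of vertices) of `G - S`. -/
noncomputable def oddComponentsCount [Fintype V] (G : SimpleGraph V) (S : Set V) : ℕ :=
  Nat.card {c : (SimpleGraph.induce Sᶜ G).ConnectedComponent // Odd c.supp.ncard}

/-- `G` is factor-critical: deleting any vertex leaves a graph with a perfect matching. -/
def IsFactorCritical (G : SimpleGraph V) : Prop :=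
  ∀ v : V, ∃ M : (SimpleGraph.induce ({v}ᶜ : Set V) G).Subgraph, M.IsPerfectMatching

/-- A graph is 2-edge-connected if it is connected and has no bridges. -/
def IsTwoEdgeConnected (G : SimpleGraph V) : Prop :=
  G.Connected ∧ ∀ e ∈ G.edgeSet, ¬ G.IsBridge e

/-- `B` is the vertex set of a balloon of `G`: a maximal 2-edge-connected subgraph of `G`
incident to exactly one cut-edge (bridge) of `G`. -/
def IsBalloon (G : SimpleGraph V) (B : Set V) : Prop :=
  IsTwoEdgeConnected (SimpleGraph.induce B G) ∧
  (∀ B' : Set V, B ⊆ B' → IsTwoEdgeConnected (SimpleGraph.induce B' G) → B' = B) ∧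
  (∃! e : Sym2 V, G.IsBridge e ∧ ∃ v ∈ e, v ∈ B)

/-- The number of balloons of `G`. -/
noncomputable def balloonCount [Fintype V] (G : SimpleGraph V) : ℕ :=
  Nat.card {B : Set V // IsBalloon G B}

/-- A dumbbell: a graph consisting of exactly two balloons (2-edge-connected pieces)
joined by a single edge. -/
def IsDumbbell (G : SimpleGraph V) : Prop :=
  ∃ B₁ B₂ : Set V, Disjoint B₁ B₂ ∧ B₁ ∪ B₂ = Set.univ ∧
    IsTwoEdgeConnected (SimpleGraph.induce B₁ G) ∧
    IsTwoEdgeConnected (SimpleGraph.induce B₂ G) ∧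
    {e : Sym2 V | e ∈ G.edgeSet ∧ (∃ v ∈ e, v ∈ B₁) ∧ (∃ v ∈ e, v ∈ B₂)}.ncard = 1

/-- The minimum degree of `G`. -/
noncomputable def minDeg [Fintype V] (G : SimpleGraph V) : ℕ :=
  sInf {k | ∃ v : V, (G.neighborSet v).ncard = k}

/-- Number of components `C` of `G - S` such that the number of edges of `G`
between `C` and `S` is odd. -/
noncomputable def qCount [Fintype V] (G : SimpleGraph V) (S : Set V) : ℕ :=
  Nat.card {c : (SimpleGraph.induce Sᶜ G).ConnectedComponent //
    Odd {p : V × V | p.1 ∈ Subtype.val '' c.supp ∧ p.2 ∈ S ∧ G.Adj p.1 p.2}.ncard}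

end Paper

/-!
Write `a = μ₂`, `b = μₙ`. For `u, v ⊥ 𝟙` with `⟪u, L v⟫ = 0`, expand in an orthonormal eigenbasis of
`L`: then `(a + b)⟪u, v⟫ = ∑ᵢ (a + b - 2λᵢ) ûᵢ v̂ᵢ`, and only eigenvalues in `[a, b]` contribute
because the eigenvector of the one eigenvalue below `μ₂` is parallel to `𝟙`. Cauchy–Schwarz gives
`((a + b)⟪u, v⟫)² ≤ (b - a)² ‖u‖² ‖v‖²`. For the centred indicators `u = n 𝟙_X - |X| 𝟙` and
`v = n 𝟙_Y - |Y| 𝟙` we have `⟪u, L v⟫ = 0` as no edge joins `X` and `Y`, `⟪u, v⟫ = -n |X| |Y|` and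
`‖u‖² = n |X| (n - |X|)`, so `(a + b)² |X| |Y| ≤ (b - a)² (n - |X|) (n - |Y|)`; since `|X| ≤ |Y|`
this turns into `(a + b) |X| ≤ (b - a) (n - |X|)`.
-/

open Matrix

theorem sq_add_mul_sum_le {ι : Type*} [Fintype ι] {lam p q : ι → ℝ} {a b : ℝ}
    (h : ∀ i, p i ≠ 0 → lam i ∈ Set.Icc a b) (h0 : ∑ i, lam i * (p i * q i) = 0) :
    ((a + b) * ∑ i, p i * q i) ^ 2 ≤ (b - a) ^ 2 * ((∑ i, p i * p i) * ∑ i, q i * q i) := by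
  have hshift : (a + b) * ∑ i, p i * q i = ∑ i, (a + b - 2 * lam i) * p i * q i := by
    simp only [sub_mul, Finset.sum_sub_distrib, mul_assoc, ← Finset.mul_sum, h0]
    ring
  have hterm : ∀ i, ((a + b - 2 * lam i) * p i) ^ 2 ≤ (b - a) ^ 2 * (p i * p i) := by
    intro i
    by_cases hp : p i = 0
    · simp [hp]
    · obtain ⟨hai, hib⟩ := h i hp
      have : (a + b - 2 * lam i) ^ 2 ≤ (b - a) ^ 2 := by nlinarith
      nlinarith [mul_self_nonneg (p i)]
  calc ((a + b) * ∑ i, p i * q i) ^ 2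
      = (∑ i, (a + b - 2 * lam i) * p i * q i) ^ 2 := by rw [hshift]
    _ ≤ (∑ i, ((a + b - 2 * lam i) * p i) ^ 2) * ∑ i, q i ^ 2 :=
      Finset.sum_mul_sq_le_sq_mul_sq _ _ _
    _ ≤ ((b - a) ^ 2 * ∑ i, p i * p i) * ∑ i, q i * q i := by
      simp only [Finset.mul_sum, sq (q _)]
      gcongr with i
      exacts [mul_self_nonneg _, hterm i]
    _ = _ := by ring

namespace Matrix.IsHermitian

variable {ι : Type*} [Fintype ι] [DecidableEq ι] {A : Matrix ι ι ℝ} (hA : A.IsHermitian)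

theorem dotProduct_eq_sum_eigenvectorBasis (u v : ι → ℝ) :
    u ⬝ᵥ v = ∑ i, (⇑(hA.eigenvectorBasis i) ⬝ᵥ u) * (⇑(hA.eigenvectorBasis i) ⬝ᵥ v) := by
  have := hA.eigenvectorBasis.sum_inner_mul_inner (WithLp.toLp 2 u) (WithLp.toLp 2 v)
  simpa [EuclideanSpace.inner_eq_star_dotProduct, dotProduct_comm v] using this.symm

theorem eigenvectorBasis_dotProduct_mulVec (i : ι) (w : ι → ℝ) :
    ⇑(hA.eigenvectorBasis i) ⬝ᵥ (A *ᵥ w) = hA.eigenvalues i * (⇑(hA.eigenvectorBasis i) ⬝ᵥ w) := by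
  rw [dotProduct_mulVec, ← mulVec_transpose, ← conjTranspose_eq_transpose_of_trivial, hA.eq,
    mulVec_eigenvectorBasis, smul_dotProduct, smul_eq_mul]

theorem dotProduct_mulVec_eq_sum_eigenvectorBasis (u v : ι → ℝ) :
    u ⬝ᵥ (A *ᵥ v) = ∑ i, hA.eigenvalues i *
      ((⇑(hA.eigenvectorBasis i) ⬝ᵥ u) * (⇑(hA.eigenvectorBasis i) ⬝ᵥ v)) := by
  simp only [hA.dotProduct_eq_sum_eigenvectorBasis u, eigenvectorBasis_dotProduct_mulVec]
  congr 1 with i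
  ring

theorem eigenvectorBasis_dotProduct_eq_zero {z u : ι → ℝ} (hz : A *ᵥ z = 0) (hz0 : z ≠ 0)
    (hzu : z ⬝ᵥ u = 0) {i : ι} (hi : ∀ j ≠ i, hA.eigenvalues j ≠ 0) :
    ⇑(hA.eigenvectorBasis i) ⬝ᵥ u = 0 := by
  set c : ι → ℝ := fun j => ⇑(hA.eigenvectorBasis j) ⬝ᵥ z
  have hc : ∀ j ≠ i, c j = 0 := fun j hj => by
    have := hA.eigenvectorBasis_dotProduct_mulVec j z
    rw [hz, dotProduct_zero, eq_comm, mul_eq_zero] at this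
    exact this.resolve_left (hi j hj)
  have hsingle (w : ι → ℝ) : z ⬝ᵥ w = c i * (⇑(hA.eigenvectorBasis i) ⬝ᵥ w) := by
    rw [hA.dotProduct_eq_sum_eigenvectorBasis]
    exact Finset.sum_eq_single i (fun j _ hj => mul_eq_zero_of_left (hc j hj) _)
      (by simp)
  have hci : c i ≠ 0 := by
    intro h
    exact hz0 (dotProduct_self_eq_zero.1 (by simpa [h] using hsingle z))
  rw [hsingle, mul_eq_zero] at hzu
  exact hzu.resolve_left hci

end Matrix.IsHermitian

theorem Matrix.PosSemidef.sq_add_mul_dotProduct_le {ι : Type*} [Fintype ι] [DecidableEq ι]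
    {A : Matrix ι ι ℝ} (hA : A.PosSemidef)
    {a b : ℝ} (hb : ∀ i, hA.1.eigenvalues i ≤ b)
    (hsmall : ∀ i j, hA.1.eigenvalues i < a → hA.1.eigenvalues j < a → i = j)
    {z u v : ι → ℝ} (hz : A *ᵥ z = 0) (hz0 : z ≠ 0) (hzu : z ⬝ᵥ u = 0)
    (huv : u ⬝ᵥ (A *ᵥ v) = 0) :
    ((a + b) * (u ⬝ᵥ v)) ^ 2 ≤ (b - a) ^ 2 * ((u ⬝ᵥ u) * (v ⬝ᵥ v)) := by
  simp only [hA.1.dotProduct_eq_sum_eigenvectorBasis u, hA.1.dotProduct_eq_sum_eigenvectorBasis v]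
  refine sq_add_mul_sum_le (fun i hi => ⟨?_, hb i⟩)
    (hA.1.dotProduct_mulVec_eq_sum_eigenvectorBasis u v ▸ huv)
  by_contra! hlt
  refine hi (hA.1.eigenvectorBasis_dotProduct_eq_zero hz hz0 hzu fun j hj => ?_)
  have : a ≤ hA.1.eigenvalues j := not_lt.1 fun hj' => hj (hsmall j i hj' hlt)
  linarith [hA.eigenvalues_nonneg i]

section Centered

variable {ι : Type*} [Fintype ι]

/-- The mean-zero part of `w`, scaled by `card ι` to avoid division. -/
def centered (w : ι → ℝ) : ι → ℝ :=
  (Fintype.card ι : ℝ) • w - (∑ i, w i) • 1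

theorem one_dotProduct_centered (w : ι → ℝ) : 1 ⬝ᵥ centered w = 0 := by
  simp only [centered, dotProduct_sub, dotProduct_smul, one_dotProduct, Pi.one_apply, smul_eq_mul,
    Finset.sum_const, Finset.card_univ, nsmul_eq_mul]
  ring

theorem centered_dotProduct_centered (w w' : ι → ℝ) :
    centered w ⬝ᵥ centered w' =
      Fintype.card ι * (Fintype.card ι * (w ⬝ᵥ w') - (∑ i, w i) * ∑ i, w' i) := by
  rw [centered, sub_dotProduct, smul_dotProduct, smul_dotProduct, one_dotProduct_centered,
    centered, dotProduct_sub, dotProduct_smul, dotProduct_smul, dotProduct_one]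
  simp only [smul_eq_mul, mul_zero, sub_zero]
  ring

theorem centered_dotProduct_mulVec_centered {A : Matrix ι ι ℝ} (hA : A.IsSymm)
    (h1 : A *ᵥ 1 = 0) (w w' : ι → ℝ) :
    centered w ⬝ᵥ (A *ᵥ centered w') = Fintype.card ι ^ 2 * (w ⬝ᵥ (A *ᵥ w')) := by
  have h1' : 1 ᵥ* A = 0 := by rw [← mulVec_transpose, hA.eq, h1]
  rw [centered, sub_dotProduct, smul_dotProduct, smul_dotProduct, dotProduct_mulVec 1, h1',
    zero_dotProduct, centered, mulVec_sub, mulVec_smul, mulVec_smul, h1]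
  simp only [smul_zero, sub_zero, dotProduct_smul, smul_eq_mul]
  ring

end Centered

theorem sum_indicator_one {ι : Type*} [Fintype ι] (X : Set ι) :
    ∑ i, X.indicator (1 : ι → ℝ) i = X.ncard := by
  classical
  simp [Set.indicator_apply, Finset.sum_boole, Set.ncard_eq_toFinset_card']

theorem indicator_one_dotProduct_indicator_one {ι : Type*} [Fintype ι] (X Y : Set ι) :
    X.indicator (1 : ι → ℝ) ⬝ᵥ Y.indicator 1 = (X ∩ Y).ncard := by
  rw [← sum_indicator_one, Set.inter_indicator_one]
  rfl

theorem SimpleGraph.indicator_one_dotProduct_lapMatrix_mulVec_eq_zero {V : Type*} [Fintype V]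
    [DecidableEq V] (G : SimpleGraph V) [DecidableRel G.Adj] {X Y : Set V} (hXY : Disjoint X Y)
    (hG : ∀ x ∈ X, ∀ y ∈ Y, ¬ G.Adj x y) :
    X.indicator 1 ⬝ᵥ (G.lapMatrix ℝ *ᵥ Y.indicator 1) = 0 := by
  refine Finset.sum_eq_zero fun x _ => ?_
  by_cases hx : x ∈ X
  · rw [G.lapMatrix_mulVec_apply, Set.indicator_of_notMem (hXY.notMem_of_mem_left hx),
      Finset.sum_eq_zero fun y hy => Set.indicator_of_notMem
        (fun hyY => hG x hx y hyY ((G.mem_neighborFinset x y).1 hy)) _]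
    simp
  · simp [hx]

namespace Paper

variable {V : Type*} [Fintype V]

theorem monotone_lapEig (G : SimpleGraph V) : Monotone (lapEig G) :=
  Tuple.monotone_sort _

theorem exists_equiv_eigenvalues_eq_lapEig [DecidableEq V] (G : SimpleGraph V)
    [DecidableRel G.Adj] :
    ∃ σ : V ≃ Fin (Fintype.card V),
      ∀ v, (G.posSemidef_lapMatrix ℝ).1.eigenvalues v = lapEig G (σ v) := by
  -- `lapEig` is built from the classical instances
  obtain rfl : ‹DecidableEq V› = Classical.decEq V := Subsingleton.elim _ _
  obtain rfl : ‹DecidableRel G.Adj› = Classical.decRel _ := Subsingleton.elim _ _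
  let _ : DecidableEq V := Classical.decEq V
  let _ : DecidableRel G.Adj := Classical.decRel _
  set f := (G.posSemidef_lapMatrix ℝ).1.eigenvalues ∘ (Fintype.equivFin V).symm
  exact ⟨(Fintype.equivFin V).trans (Tuple.sort f).symm, fun v => by simp [lapEig, f]⟩

theorem mu_nonneg (G : SimpleGraph V) (i : ℕ) : 0 ≤ mu G i := by
  classical
  obtain ⟨σ, hσ⟩ := exists_equiv_eigenvalues_eq_lapEig G
  unfold mu
  split_ifs
  · rw [← σ.apply_symm_apply ⟨_, _⟩, ← hσ]
    exact (G.posSemidef_lapMatrix ℝ).eigenvalues_nonneg _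
  · rfl

theorem mu_le_mu (G : SimpleGraph V) {i j : ℕ} (hi : 1 ≤ i) (hij : i ≤ j)
    (hj : j ≤ Fintype.card V) : mu G i ≤ mu G j := by
  unfold mu
  rw [dif_pos (by omega), dif_pos (by omega)]
  exact monotone_lapEig G (Fin.mk_le_mk.2 (by omega))

theorem eigenvalues_le_mu_card [DecidableEq V] (G : SimpleGraph V) [DecidableRel G.Adj] (v : V) :
    (G.posSemidef_lapMatrix ℝ).1.eigenvalues v ≤ mu G (Fintype.card V) := by
  obtain ⟨σ, hσ⟩ := exists_equiv_eigenvalues_eq_lapEig G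
  have hcard : Fintype.card V - 1 < Fintype.card V := by have := (σ v).isLt; omega
  rw [hσ, mu, dif_pos hcard]
  exact monotone_lapEig G (Fin.mk_le_mk.2 (by omega))

theorem eq_of_eigenvalues_lt_mu_two [DecidableEq V] (G : SimpleGraph V) [DecidableRel G.Adj]
    {v w : V} (hv : (G.posSemidef_lapMatrix ℝ).1.eigenvalues v < mu G 2)
    (hw : (G.posSemidef_lapMatrix ℝ).1.eigenvalues w < mu G 2) : v = w := by
  obtain ⟨σ, hσ⟩ := exists_equiv_eigenvalues_eq_lapEig G
  unfold mu at hv hw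
  split_ifs at hv hw with h
  · rw [hσ] at hv hw
    have hv' := (monotone_lapEig G).reflect_lt hv
    have hw' := (monotone_lapEig G).reflect_lt hw
    exact σ.injective (Fin.ext (by simp only [Fin.lt_def] at hv' hw'; omega))
  · exact Fintype.card_le_one_iff.1 (by omega) v w

end Paper

theorem two_mul_mul_le_of_sq_le {a b x y n : ℝ} (ha : 0 ≤ a) (hab : a ≤ b) (hx : 0 < x)
    (hxy : x ≤ y) (hn : x + y ≤ n)
    (h : ((a + b) * (x * y)) ^ 2 ≤ (b - a) ^ 2 * ((x * (n - x)) * (y * (n - y)))) :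
    2 * b * x ≤ (b - a) * n := by
  have hy : 0 < y := hx.trans_le hxy
  have h₁ : (a + b) ^ 2 * (x * y) ≤ (b - a) ^ 2 * ((n - x) * (n - y)) := by
    refine le_of_mul_le_mul_left ?_ (mul_pos hx hy)
    linarith
  -- `x ≤ y` gives `(n - y) / y ≤ (n - x) / x`
  have h₂ : ((a + b) * x) ^ 2 ≤ ((b - a) * (n - x)) ^ 2 := by
    refine le_of_mul_le_mul_left ?_ hy
    nlinarith [mul_le_mul_of_nonneg_left (show x * (n - y) ≤ y * (n - x) by nlinarith)
      (mul_nonneg (sq_nonneg (b - a)) (by linarith : 0 ≤ n - x))]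
  have h₃ : (a + b) * x ≤ (b - a) * (n - x) :=
    (pow_le_pow_iff_left₀ (mul_nonneg (by linarith) hx.le) (mul_nonneg (by linarith) (by linarith))
      two_ne_zero).1 h₂
  linarith

open Paper in
theorem lemma_part_one_general {n : ℕ} (G : SimpleGraph (Fin n))
    (X Y : Set (Fin n)) (hdisj : Disjoint X Y)
    (hX : X.Nonempty) (hle : X.ncard ≤ Y.ncard) (hNoEdge : ∀ x ∈ X, ∀ y ∈ Y, ¬ G.Adj x y) :
    2 * mu G n * (X.ncard : ℝ) ≤ (mu G n - mu G 2) * (n : ℝ) := by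
  classical
  have hx : 0 < X.ncard := (Set.ncard_pos X.toFinite).2 hX
  have hxy : X.ncard + Y.ncard ≤ n := by
    simpa [Set.ncard_union_eq hdisj] using Set.ncard_le_ncard (Set.subset_univ (X ∪ Y))
  have hL1 : G.lapMatrix ℝ *ᵥ 1 = 0 := G.lapMatrix_mulVec_const_eq_zero
  have key := (G.posSemidef_lapMatrix ℝ).sq_add_mul_dotProduct_le (a := mu G 2)
    (eigenvalues_le_mu_card G) (fun _ _ => eq_of_eigenvalues_lt_mu_two G) hL1
    (Function.ne_iff.2 ⟨⟨0, by omega⟩, one_ne_zero⟩)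
    (one_dotProduct_centered (X.indicator 1)) (v := centered (Y.indicator 1))
    (by rw [centered_dotProduct_mulVec_centered (G.isSymm_lapMatrix ℝ) hL1,
      G.indicator_one_dotProduct_lapMatrix_mulVec_eq_zero hdisj hNoEdge, mul_zero])
  simp only [centered_dotProduct_centered, sum_indicator_one, indicator_one_dotProduct_indicator_one,
    Set.inter_self, hdisj.inter_eq, Set.ncard_empty, Fintype.card_fin, Nat.cast_zero] at key
  refine two_mul_mul_le_of_sq_le (mu_nonneg G 2)
    (mu_le_mu G one_le_two (by omega) (Fintype.card_fin n).ge) (by exact_mod_cast hx)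
    (by exact_mod_cast hle : (X.ncard : ℝ) ≤ Y.ncard) (by exact_mod_cast hxy) ?_
  have hn : (0 : ℝ) < n := Nat.cast_pos.2 (by omega)
  refine le_of_mul_le_mul_left ?_ (pow_pos hn 2)
  exact ((by ring : _ = _).trans_le key).trans_eq (by ring)

open Paper in
/-- Key lemma, part 1: `2·μₙ·|X| ≤ (μₙ − μ₂)·n`. -/
theorem lemma_part_one {n : ℕ} (G : SimpleGraph (Fin n)) (hE : G.edgeSet.Nonempty)
    (S X Y : Set (Fin n)) (hS : S ⊂ Set.univ) (hdisj : Disjoint X Y)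
    (hX : X.Nonempty) (hY : Y.Nonempty) (hUnion : X ∪ Y = Set.univ \ S)
    (hle : X.ncard ≤ Y.ncard) (hNoEdge : ∀ x ∈ X, ∀ y ∈ Y, ¬ G.Adj x y) :
    2 * mu G n * (X.ncard : ℝ) ≤ (mu G n - mu G 2) * (n : ℝ) :=
  lemma_part_one_general G X Y hdisj hX hle hNoEdge
end

section
/- Let G be a simple graph on n vertices with at least one edge, let S be a proper subset of V(G), and let X and Y be disjoint nonempty vertex subsets with X ∪ Y = V(G) − S, |X| ≤ |Y|, and no edge of G joining a vertex of X to a vertex of Y. If 2·μₙ(G)·|X| = (μₙ(G) − μ₂(G))·n, then |X| = |Y|. -/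
/-!
Write `a = |X|`, `b = |Y|` and `𝟙_Z` for indicator vectors. As no edge joins `X` and `Y`, the
vectors `f = b 𝟙_X - a 𝟙_Y` and `w = b 𝟙_X + a 𝟙_Y - (2ab/n) 𝟙` have the same Laplacian quadratic
form `q` (`w` is the projection of `b 𝟙_X + a 𝟙_Y` orthogonally to `𝟙`, which `L` does not see).
As `f ⊥ 𝟙`, the Rayleigh bounds give `μ₂ ‖f‖² ≤ q ≤ μₙ ‖w‖²`, i.e.
`μ₂ n (a + b) ≤ μₙ (n (a + b) - 4ab)`. Since `4ab ≥ 2a (a + b)`, with equality only if `a = b`,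
this yields `2 μₙ a ≤ (μₙ - μ₂) n`, strictly when `a < b`, because an edge forces
`μₙ ≥ max degree > 0`.
-/

open Matrix Paper

namespace Matrix.IsHermitian

variable {N : Type*} [Fintype N] [DecidableEq N] {A : Matrix N N ℝ} (hA : A.IsHermitian)

theorem eigenvectorUnitary_mul_transpose_self :
    (hA.eigenvectorUnitary : Matrix N N ℝ) * (hA.eigenvectorUnitary : Matrix N N ℝ)ᵀ = 1 := by
  simpa [star_eq_conjTranspose] using Unitary.coe_mul_star_self hA.eigenvectorUnitary

theorem dotProduct_transpose_eigenvectorUnitary_mulVec (x y : N → ℝ) :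
    ((hA.eigenvectorUnitary : Matrix N N ℝ)ᵀ *ᵥ x) ⬝ᵥ
        ((hA.eigenvectorUnitary : Matrix N N ℝ)ᵀ *ᵥ y) = x ⬝ᵥ y := by
  rw [mulVec_transpose, ← dotProduct_mulVec, mulVec_mulVec,
    eigenvectorUnitary_mul_transpose_self, one_mulVec]

theorem transpose_eigenvectorUnitary_mulVec_mulVec (x : N → ℝ) :
    (hA.eigenvectorUnitary : Matrix N N ℝ)ᵀ *ᵥ (A *ᵥ x)
      = fun i ↦ hA.eigenvalues i * ((hA.eigenvectorUnitary : Matrix N N ℝ)ᵀ *ᵥ x) i := by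
  set U : Matrix N N ℝ := (hA.eigenvectorUnitary : Matrix N N ℝ)
  have hdiag := hA.conjStarAlgAut_star_eigenvectorUnitary
  rw [Unitary.conjStarAlgAut_star_apply, star_eq_conjTranspose,
    conjTranspose_eq_transpose_of_trivial, RCLike.ofReal_real_eq_id, Function.id_comp] at hdiag
  have hUA : Uᵀ * A = diagonal hA.eigenvalues * Uᵀ := by
    rw [← hdiag, mul_assoc, eigenvectorUnitary_mul_transpose_self, mul_one]
  ext i
  rw [mulVec_mulVec, hUA, ← mulVec_mulVec, mulVec_diagonal]

theorem dotProduct_mulVec_eq_sum_eigenvalues (x : N → ℝ) :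
    x ⬝ᵥ A *ᵥ x
      = ∑ i, hA.eigenvalues i * ((hA.eigenvectorUnitary : Matrix N N ℝ)ᵀ *ᵥ x) i ^ 2 := by
  rw [← hA.dotProduct_transpose_eigenvectorUnitary_mulVec,
    transpose_eigenvectorUnitary_mulVec_mulVec, dotProduct]
  exact Finset.sum_congr rfl fun i _ ↦ by ring

theorem dotProduct_self_eq_sum_sq (x : N → ℝ) :
    x ⬝ᵥ x = ∑ i, ((hA.eigenvectorUnitary : Matrix N N ℝ)ᵀ *ᵥ x) i ^ 2 := by
  rw [← hA.dotProduct_transpose_eigenvectorUnitary_mulVec, dotProduct]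
  exact Finset.sum_congr rfl fun i _ ↦ by ring

theorem dotProduct_mulVec_le_of_eigenvalues_le {c : ℝ} (hc : ∀ i, hA.eigenvalues i ≤ c)
    (x : N → ℝ) : x ⬝ᵥ A *ᵥ x ≤ c * (x ⬝ᵥ x) := by
  rw [hA.dotProduct_mulVec_eq_sum_eigenvalues, hA.dotProduct_self_eq_sum_sq, Finset.mul_sum]
  exact Finset.sum_le_sum fun i _ ↦ mul_le_mul_of_nonneg_right (hc i) (sq_nonneg _)

theorem le_dotProduct_mulVec_of_dotProduct_eigenvector_eq_zero {v x : N → ℝ} {μ c : ℝ}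
    (i₀ : N) (hv : A *ᵥ v = μ • v) (hv₀ : v ≠ 0) (hμc : μ < c)
    (hc : ∀ i, i ≠ i₀ → c ≤ hA.eigenvalues i) (hx : x ⬝ᵥ v = 0) :
    c * (x ⬝ᵥ x) ≤ x ⬝ᵥ A *ᵥ x := by
  rw [hA.dotProduct_mulVec_eq_sum_eigenvalues, hA.dotProduct_self_eq_sum_sq, Finset.mul_sum]
  set U : Matrix N N ℝ := (hA.eigenvectorUnitary : Matrix N N ℝ)
  -- `μ` can only be the eigenvalue at `i₀`, and `v` spans its eigenspace, so `x ⊥ v` has no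
  -- `i₀`-coordinate
  have hv_coord : ∀ j, j ≠ i₀ → (Uᵀ *ᵥ v) j = 0 := by
    intro j hj
    have hj' := congrFun (hA.transpose_eigenvectorUnitary_mulVec_mulVec v) j
    rw [hv, mulVec_smul, Pi.smul_apply, smul_eq_mul] at hj'
    have : (hA.eigenvalues j - μ) * (Uᵀ *ᵥ v) j = 0 := by linear_combination -hj'
    exact (mul_eq_zero.mp this).resolve_left (by linarith [hc j hj])
  have hv_coord₀ : (Uᵀ *ᵥ v) i₀ ≠ 0 := by
    intro h0
    have : Uᵀ *ᵥ v = 0 := funext fun j ↦ if hj : j = i₀ then hj ▸ h0 else hv_coord j hj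
    apply hv₀
    rw [← dotProduct_self_eq_zero, ← hA.dotProduct_transpose_eigenvectorUnitary_mulVec, this,
      dotProduct_zero]
  have hx_coord₀ : (Uᵀ *ᵥ x) i₀ = 0 := by
    rw [← hA.dotProduct_transpose_eigenvectorUnitary_mulVec, dotProduct,
      Finset.sum_eq_single i₀ (fun j _ hj ↦ by rw [hv_coord j hj, mul_zero]) (by simp)] at hx
    exact (mul_eq_zero.mp hx).resolve_right hv_coord₀
  refine Finset.sum_le_sum fun i _ ↦ ?_
  rcases eq_or_ne i i₀ with rfl | hi
  · simp [hx_coord₀]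
  · exact mul_le_mul_of_nonneg_right (hc i hi) (sq_nonneg _)

end Matrix.IsHermitian

theorem Fintype.sum_indicator_const {V : Type*} [Fintype V] (X : Set V) (c : ℝ) :
    ∑ i, X.indicator (fun _ ↦ c) i = c * X.ncard := by
  classical
  simp [Set.indicator_apply, Finset.sum_ite, Set.ncard_eq_toFinset_card', mul_comm]

theorem Fintype.sum_comp_indicator_add_indicator {V : Type*} [Fintype V] {X Y : Set V}
    (hXY : Disjoint X Y) (p q : ℝ) (g : ℝ → ℝ) :
    ∑ i, g (X.indicator (fun _ ↦ p) i + Y.indicator (fun _ ↦ q) i)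
      = (g p - g 0) * X.ncard + (g q - g 0) * Y.ncard + g 0 * Fintype.card V := by
  have hpt : ∀ i, g (X.indicator (fun _ ↦ p) i + Y.indicator (fun _ ↦ q) i)
      = X.indicator (fun _ ↦ g p - g 0) i + Y.indicator (fun _ ↦ g q - g 0) i + g 0 := by
    intro i
    by_cases hX : i ∈ X
    · simp [hX, hXY.notMem_of_mem_left hX]
    · by_cases hY : i ∈ Y <;> simp [hX, hY]
  simp only [hpt, Finset.sum_add_distrib, Fintype.sum_indicator_const, Finset.sum_const,
    Finset.card_univ, nsmul_eq_mul]
  ring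

namespace SimpleGraph

variable {V : Type*} [Fintype V]

theorem monotone_lapEig (G : SimpleGraph V) : Monotone (lapEig G) :=
  Tuple.monotone_sort _

section Laplacian

variable [DecidableEq V] (G : SimpleGraph V) [DecidableRel G.Adj]

theorem exists_equiv_eigenvalues_lapMatrix_eq_lapEig :
    ∃ σ : V ≃ Fin (Fintype.card V),
      ∀ i, (G.posSemidef_lapMatrix ℝ).isHermitian.eigenvalues i = lapEig G (σ i) := by
  classical
  set F : Fin (Fintype.card V) → ℝ :=
    (G.posSemidef_lapMatrix ℝ).isHermitian.eigenvalues ∘ (Fintype.equivFin V).symm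
  have hF : lapEig G = F ∘ Tuple.sort F := by
    unfold lapEig
    congr!
  refine ⟨(Fintype.equivFin V).trans (Tuple.sort F).symm, fun i ↦ ?_⟩
  simp [hF, F]

theorem dotProduct_lapMatrix_mulVec_le_mu_card [Nonempty V] (x : V → ℝ) :
    x ⬝ᵥ G.lapMatrix ℝ *ᵥ x ≤ mu G (Fintype.card V) * (x ⬝ᵥ x) := by
  obtain ⟨σ, hσ⟩ := G.exists_equiv_eigenvalues_lapMatrix_eq_lapEig
  refine (G.posSemidef_lapMatrix ℝ).isHermitian.dotProduct_mulVec_le_of_eigenvalues_le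
    (fun i ↦ ?_) x
  have hlast : Fintype.card V - 1 < Fintype.card V := Nat.sub_lt Fintype.card_pos one_pos
  rw [hσ, mu, dif_pos hlast]
  exact G.monotone_lapEig (Fin.le_def.mpr (Nat.le_sub_one_of_lt (σ i).isLt))

theorem degree_le_mu_card (v : V) : (G.degree v : ℝ) ≤ mu G (Fintype.card V) := by
  have : Nonempty V := ⟨v⟩
  simpa [lapMatrix, degMatrix] using G.dotProduct_lapMatrix_mulVec_le_mu_card (Pi.single v 1)

theorem mu_two_mul_le_dotProduct_lapMatrix_mulVec (x : V → ℝ) (hx : ∑ i, x i = 0) :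
    mu G 2 * (x ⬝ᵥ x) ≤ x ⬝ᵥ G.lapMatrix ℝ *ᵥ x := by
  rcases le_or_gt (mu G 2) 0 with hμ | hμ
  · have hL : 0 ≤ x ⬝ᵥ G.lapMatrix ℝ *ᵥ x := by
      simpa using (G.posSemidef_lapMatrix ℝ).dotProduct_mulVec_nonneg x
    have hx2 : 0 ≤ x ⬝ᵥ x := by simpa using dotProduct_self_star_nonneg x
    nlinarith
  -- `mu G 2` is a junk `0` unless there are at least two vertices
  have hcard : 1 < Fintype.card V := by
    by_contra h
    rw [mu, dif_neg h] at hμ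
    exact hμ.false
  have : Nonempty V := Fintype.card_pos_iff.mp (by omega)
  obtain ⟨σ, hσ⟩ := G.exists_equiv_eigenvalues_lapMatrix_eq_lapEig
  refine (G.posSemidef_lapMatrix ℝ).isHermitian
    |>.le_dotProduct_mulVec_of_dotProduct_eigenvector_eq_zero (σ.symm ⟨0, by omega⟩)
      (v := fun _ ↦ 1) (μ := 0) ?_ ?_ hμ (fun i hi ↦ ?_) ?_
  · rw [lapMatrix_mulVec_const_eq_zero, zero_smul]
  · exact Function.ne_iff.mpr ⟨Classical.arbitrary V, one_ne_zero⟩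
  · rw [hσ, mu, dif_pos hcard]
    refine G.monotone_lapEig (Fin.le_def.mpr ?_)
    have : σ i ≠ ⟨0, by omega⟩ := fun h ↦ hi (σ.eq_symm_apply.mpr h)
    exact Nat.one_le_iff_ne_zero.mpr (Fin.val_ne_iff.mpr this)
  · simpa [dotProduct] using hx

theorem dotProduct_lapMatrix_mulVec_eq_mul_of_sq_sub_eq {x y : V → ℝ} {c : ℝ}
    (h : ∀ i j, G.Adj i j → (x i - x j) ^ 2 = c * (y i - y j) ^ 2) :
    x ⬝ᵥ G.lapMatrix ℝ *ᵥ x = c * (y ⬝ᵥ G.lapMatrix ℝ *ᵥ y) := by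
  simp only [← toLinearMap₂'_apply', lapMatrix_toLinearMap₂', mul_div_assoc', Finset.mul_sum]
  congr 1
  refine Finset.sum_congr rfl fun i _ ↦ Finset.sum_congr rfl fun j _ ↦ ?_
  split_ifs with hij
  · exact h i j hij
  · rw [mul_zero]

end Laplacian

variable (G : SimpleGraph V)

theorem mu_card_pos_of_adj {u v : V} (huv : G.Adj u v) : 0 < mu G (Fintype.card V) := by
  classical
  have hdeg : 0 < G.degree u := (G.degree_pos_iff_exists_adj u).mpr ⟨v, huv⟩
  exact (Nat.cast_pos.mpr hdeg).trans_le (G.degree_le_mu_card u)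

theorem mu_two_mul_le_of_forall_not_adj {X Y : Set V} (hXY : Disjoint X Y) (hX : X.Nonempty)
    (hY : Y.Nonempty) (hadj : ∀ x ∈ X, ∀ y ∈ Y, ¬ G.Adj x y) :
    mu G 2 * (Fintype.card V * (X.ncard + Y.ncard))
      ≤ mu G (Fintype.card V) *
          (Fintype.card V * (X.ncard + Y.ncard) - 4 * X.ncard * Y.ncard) := by
  classical
  have : Nonempty V := ⟨hX.some⟩
  set a : ℝ := (X.ncard : ℝ)
  set b : ℝ := (Y.ncard : ℝ)
  set n : ℝ := (Fintype.card V : ℝ)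
  have ha : 0 < a := by simpa [a] using hX.ncard_pos
  have hb : 0 < b := by simpa [b] using hY.ncard_pos
  have hn : 0 < n := by simpa [n] using Fintype.card_pos
  set f : V → ℝ := fun i ↦ X.indicator (fun _ ↦ b) i + Y.indicator (fun _ ↦ -a) i
  -- `n` times the projection of `b 𝟙_X + a 𝟙_Y` orthogonally to `𝟙`
  set w : V → ℝ :=
    fun i ↦ n * (X.indicator (fun _ ↦ b) i + Y.indicator (fun _ ↦ a) i) - 2 * a * b
  have hf_sum : ∑ i, f i = 0 := by
    have h := Fintype.sum_comp_indicator_add_indicator hXY b (-a) id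
    simp only [id] at h
    rw [h]
    ring
  have hf : f ⬝ᵥ f = a * b * (a + b) := by
    rw [dotProduct, Fintype.sum_comp_indicator_add_indicator hXY b (-a) fun t ↦ t * t]
    ring
  have hw : w ⬝ᵥ w = n * a * b * (n * (a + b) - 4 * a * b) := by
    rw [dotProduct, Fintype.sum_comp_indicator_add_indicator hXY b a
      fun t ↦ (n * t - 2 * a * b) * (n * t - 2 * a * b)]
    ring
  have hwf : w ⬝ᵥ G.lapMatrix ℝ *ᵥ w = n ^ 2 * (f ⬝ᵥ G.lapMatrix ℝ *ᵥ f) := by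
    refine G.dotProduct_lapMatrix_mulVec_eq_mul_of_sq_sub_eq fun i j hij ↦ ?_
    have hYX : ∀ k ∈ Y, k ∉ X := fun k hkY hkX ↦ hXY.notMem_of_mem_left hkX hkY
    by_cases hiY : i ∈ Y <;> by_cases hjY : j ∈ Y
    · simp [w, f, hiY, hjY, hYX i hiY, hYX j hjY]
    · have hjX : j ∉ X := fun hjX ↦ hadj j hjX i hiY hij.symm
      simp [w, f, hiY, hjY, hYX i hiY, hjX]
      ring
    · have hiX : i ∉ X := fun hiX ↦ hadj i hiX j hjY hij
      simp [w, f, hiY, hjY, hiX, hYX j hjY]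
      ring
    · simp [w, f, hiY, hjY]
      ring
  refine le_of_mul_le_mul_left ?_ (by positivity : 0 < n * a * b)
  calc n * a * b * (mu G 2 * (n * (a + b))) = n ^ 2 * (mu G 2 * (f ⬝ᵥ f)) := by rw [hf]; ring
    _ ≤ n ^ 2 * (f ⬝ᵥ G.lapMatrix ℝ *ᵥ f) := by
      gcongr
      exact G.mu_two_mul_le_dotProduct_lapMatrix_mulVec f hf_sum
    _ = w ⬝ᵥ G.lapMatrix ℝ *ᵥ w := hwf.symm
    _ ≤ mu G (Fintype.card V) * (w ⬝ᵥ w) := G.dotProduct_lapMatrix_mulVec_le_mu_card w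
    _ = n * a * b * (mu G (Fintype.card V) * (n * (a + b) - 4 * a * b)) := by rw [hw]; ring

end SimpleGraph

open Paper in
theorem lemma_eq_one_general {n : ℕ} (G : SimpleGraph (Fin n)) (hE : G.edgeSet.Nonempty)
    (X Y : Set (Fin n)) (hdisj : Disjoint X Y)
    (hX : X.Nonempty) (hY : Y.Nonempty)
    (hle : X.ncard ≤ Y.ncard) (hNoEdge : ∀ x ∈ X, ∀ y ∈ Y, ¬ G.Adj x y)
    (heq : 2 * mu G n * (X.ncard : ℝ) = (mu G n - mu G 2) * (n : ℝ)) :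
    X.ncard = Y.ncard := by
  refine hle.eq_or_lt.resolve_right fun hlt ↦ ?_
  obtain ⟨⟨u, v⟩, huv⟩ := hE
  have hμ : 0 < mu G n := by simpa using G.mu_card_pos_of_adj huv
  have hbound := G.mu_two_mul_le_of_forall_not_adj hdisj hX hY hNoEdge
  rw [Fintype.card_fin] at hbound
  have ha : (0 : ℝ) < X.ncard := by exact_mod_cast hX.ncard_pos
  have hab : (X.ncard : ℝ) < Y.ncard := by exact_mod_cast hlt
  nlinarith [mul_pos hμ (mul_pos ha (sub_pos.mpr hab))]

open Paper in
/-- Equality in `2·μₙ·|X| ≤ (μₙ − μ₂)·n` forces `|X| = |Y|`. -/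
theorem lemma_eq_one {n : ℕ} (G : SimpleGraph (Fin n)) (hE : G.edgeSet.Nonempty)
    (S X Y : Set (Fin n)) (hS : S ⊂ Set.univ) (hdisj : Disjoint X Y)
    (hX : X.Nonempty) (hY : Y.Nonempty) (hUnion : X ∪ Y = Set.univ \ S)
    (hle : X.ncard ≤ Y.ncard) (hNoEdge : ∀ x ∈ X, ∀ y ∈ Y, ¬ G.Adj x y)
    (heq : 2 * mu G n * (X.ncard : ℝ) = (mu G n - mu G 2) * (n : ℝ)) :
    X.ncard = Y.ncard :=
  lemma_eq_one_general G hE X Y hdisj hX hY hle hNoEdge heq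
end

section
/- Let G be a simple graph on n vertices with at least one edge, and let X and Y be two disjoint subsets of V(G) such that no edge of G joins a vertex of X to a vertex of Y. Then |X|·|Y|·(μₙ(G) + μ₂(G))² ≤ (n − |X|)·(n − |Y|)·(μₙ(G) − μ₂(G))². -/
/-!
Write `c = (μₙ + μ₂) / 2` and `r = (μₙ - μ₂) / 2`. Since `L 𝟙 = 0` and at most one eigenvalue of
the Laplacian `L` lies below `μ₂`, every `u ⊥ 𝟙` lies in the span of the eigenvectors with
eigenvalues in `[μ₂, μₙ]`, hence `‖(L - c) u‖ ≤ r ‖u‖`. If moreover `⟪u, L v⟫ = 0`, then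
`⟪(L - c) u, v⟫ = -c ⟪u, v⟫`, and Cauchy–Schwarz gives `c² ⟪u, v⟫² ≤ r² ‖u‖² ‖v‖²`.
For the centred indicators `u = n 𝟙_X - |X| 𝟙` and `v = n 𝟙_Y - |Y| 𝟙`, the absence of edges
between the disjoint sets `X` and `Y` gives `⟪u, L v⟫ = 0`, while `⟪u, v⟫ = -n |X| |Y|` and
`‖u‖² = n |X| (n - |X|)`.
-/

open scoped RealInnerProductSpace Matrix
open Finset Matrix

namespace LinearMap.IsSymmetric

variable {ι E : Type*} [Fintype ι] [NormedAddCommGroup E] [InnerProductSpace ℝ E]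
  {T : E →ₗ[ℝ] E} {b : OrthonormalBasis ι ℝ E} {μ : ι → ℝ}

theorem inner_eigenvector_apply (hT : T.IsSymmetric) (hb : ∀ i, T (b i) = μ i • b i)
    (i : ι) (u : E) : ⟪b i, T u⟫ = μ i * ⟪b i, u⟫ := by
  rw [← hT, hb, real_inner_smul_left]

theorem norm_apply_sub_smul_sq_le (hT : T.IsSymmetric) (hb : ∀ i, T (b i) = μ i • b i)
    {u : E} {a c : ℝ} (hu : ∀ i, μ i ∉ Set.Icc a c → ⟪b i, u⟫ = 0) :
    ‖T u - ((a + c) / 2) • u‖ ^ 2 ≤ ((c - a) / 2) ^ 2 * ‖u‖ ^ 2 := by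
  rw [← b.sum_sq_inner_right, ← b.sum_sq_inner_right, Finset.mul_sum]
  refine Finset.sum_le_sum fun i _ => ?_
  rw [inner_sub_right, inner_eigenvector_apply hT hb, real_inner_smul_right, ← sub_mul, mul_pow]
  by_cases hi : μ i ∈ Set.Icc a c
  · have hdist : (μ i - (a + c) / 2) ^ 2 ≤ ((c - a) / 2) ^ 2 := by nlinarith [hi.1, hi.2]
    exact mul_le_mul_of_nonneg_right hdist (sq_nonneg _)
  · simp [hu i hi]

theorem sq_inner_le_of_inner_apply_eq_zero (hT : T.IsSymmetric)
    (hb : ∀ i, T (b i) = μ i • b i) {u v : E} {a c : ℝ}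
    (hu : ∀ i, μ i ∉ Set.Icc a c → ⟪b i, u⟫ = 0) (huv : ⟪u, T v⟫ = 0) :
    (a + c) ^ 2 * ⟪u, v⟫ ^ 2 ≤ (c - a) ^ 2 * (‖u‖ ^ 2 * ‖v‖ ^ 2) := by
  have hshift : ⟪T u - ((a + c) / 2) • u, v⟫ = -((a + c) / 2 * ⟪u, v⟫) := by
    rw [inner_sub_left, hT, huv, real_inner_smul_left, zero_sub]
  have hCS := real_inner_mul_inner_self_le (T u - ((a + c) / 2) • u) v
  rw [hshift, real_inner_self_eq_norm_sq, real_inner_self_eq_norm_sq] at hCS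
  nlinarith [norm_apply_sub_smul_sq_le hT hb hu, sq_nonneg ‖v‖]

theorem inner_eigenvector_eq_zero_of_inner_ker_eq_zero (hT : T.IsSymmetric)
    (hb : ∀ i, T (b i) = μ i • b i) {z u : E} (hz : T z = 0) (hz0 : z ≠ 0)
    {i : ι} (hi : ∀ j ≠ i, μ j ≠ 0) (hzu : ⟪z, u⟫ = 0) : ⟪b i, u⟫ = 0 := by
  have hzj : ∀ j ≠ i, ⟪b j, z⟫ = 0 := fun j hj => by
    have hj' := inner_eigenvector_apply hT hb j z
    rw [hz, inner_zero_right] at hj'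
    exact (mul_eq_zero.1 hj'.symm).resolve_left (hi j hj)
  have hzi : ⟪b i, z⟫ ≠ 0 := by
    have hnorm := b.sum_sq_inner_right z
    rw [Finset.sum_eq_single i (fun j _ hj => by rw [hzj j hj, sq, zero_mul]) (by simp)] at hnorm
    intro h
    rw [h, sq, zero_mul, eq_comm, sq_eq_zero_iff, norm_eq_zero] at hnorm
    exact hz0 hnorm
  rw [← b.sum_inner_mul_inner, Finset.sum_eq_single i
    (fun j _ hj => by rw [real_inner_comm, hzj j hj, zero_mul]) (by simp), real_inner_comm] at hzu
  exact (mul_eq_zero.1 hzu).resolve_left hzi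

end LinearMap.IsSymmetric

theorem Matrix.IsHermitian.toEuclideanLin_eigenvectorBasis {ι : Type*} [Fintype ι]
    [DecidableEq ι] {A : Matrix ι ι ℝ} (hA : A.IsHermitian) (i : ι) :
    toEuclideanLin A (hA.eigenvectorBasis i) = hA.eigenvalues i • hA.eigenvectorBasis i :=
  WithLp.ofLp_injective 2 (hA.mulVec_eigenvectorBasis i)

namespace Tuple

variable {α : Type*} [LinearOrder α] {m : ℕ} (f : Fin m → α)

theorem apply_le_comp_sort {i k : Fin m} (h : (sort f).symm i ≤ k) : f i ≤ (f ∘ sort f) k := by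
  simpa using monotone_sort f h

theorem comp_sort_le_apply {i k : Fin m} (h : k ≤ (sort f).symm i) : (f ∘ sort f) k ≤ f i := by
  simpa using monotone_sort f h

theorem comp_sort_one_le_apply {i j : Fin m} (h1 : 1 < m) (hi : f i < (f ∘ sort f) ⟨1, h1⟩)
    (hj : j ≠ i) : (f ∘ sort f) ⟨1, h1⟩ ≤ f j := by
  have pos_eq_zero : ∀ k, f k < (f ∘ sort f) ⟨1, h1⟩ → ((sort f).symm k : ℕ) = 0 := by
    intro k hk
    by_contra h
    exact hk.not_ge (comp_sort_le_apply f (Fin.le_def.2 (by simp only; omega)))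
  by_contra! hj'
  exact hj ((sort f).symm.injective (Fin.ext ((pos_eq_zero j hj').trans (pos_eq_zero i hi).symm)))

end Tuple

section Indicator

variable {V R : Type*} [Fintype V] [DecidableEq V] [NonAssocSemiring R]

theorem indicator_dotProduct_indicator (s t : Finset V) :
    ((fun a => if a ∈ s then (1 : R) else 0) ⬝ᵥ fun a => if a ∈ t then 1 else 0) =
      #(s ∩ t) := by
  simp [dotProduct, ← ite_and, Finset.filter_and, Finset.inter_comm]

theorem indicator_dotProduct_one (s : Finset V) :
    ((fun a => if a ∈ s then (1 : R) else 0) ⬝ᵥ fun _ => 1) = #s := by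
  simp [dotProduct]

theorem one_dotProduct_indicator (s : Finset V) :
    ((fun _ => (1 : R)) ⬝ᵥ fun a => if a ∈ s then 1 else 0) = #s := by
  simp [dotProduct]

end Indicator

namespace Paper

variable {V : Type*} [Fintype V] (G : SimpleGraph V) [DecidableEq V] [DecidableRel G.Adj]

theorem lapEig_eq_comp_sort (hL : (G.lapMatrix ℝ).IsHermitian) :
    lapEig G = (hL.eigenvalues ∘ (Fintype.equivFin V).symm) ∘
      Tuple.sort (hL.eigenvalues ∘ (Fintype.equivFin V).symm) := by
  obtain rfl : ‹DecidableEq V› = Classical.decEq V := Subsingleton.elim _ _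
  obtain rfl : ‹DecidableRel G.Adj› = Classical.decRel _ := Subsingleton.elim _ _
  rfl

theorem eigenvalues_le_mu_card_s12 (hL : (G.lapMatrix ℝ).IsHermitian) (v : V) :
    hL.eigenvalues v ≤ mu G (Fintype.card V) := by
  have hpos : 0 < Fintype.card V := Fintype.card_pos_iff.2 ⟨v⟩
  rw [mu, dif_pos (by omega), lapEig_eq_comp_sort G hL]
  simpa using Tuple.apply_le_comp_sort (hL.eigenvalues ∘ (Fintype.equivFin V).symm)
    (i := Fintype.equivFin V v)
    (show _ ≤ (⟨Fintype.card V - 1, by omega⟩ : Fin _) from Fin.le_def.2 (by simp only; omega))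

theorem mu_two_le_eigenvalues_of_lt (hL : (G.lapMatrix ℝ).IsHermitian) {v w : V}
    (hv : hL.eigenvalues v < mu G 2) (hw : w ≠ v) : mu G 2 ≤ hL.eigenvalues w := by
  have h1 : 1 < Fintype.card V := Fintype.one_lt_card_iff.2 ⟨w, v, hw⟩
  rw [mu, dif_pos h1, lapEig_eq_comp_sort G hL] at hv ⊢
  simpa using Tuple.comp_sort_one_le_apply (hL.eigenvalues ∘ (Fintype.equivFin V).symm) h1
    (i := Fintype.equivFin V v) (j := Fintype.equivFin V w) (by simpa using hv) (by simpa using hw)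

theorem inner_eigenvectorBasis_eq_zero_of_sum_eq_zero (hL : (G.lapMatrix ℝ).IsHermitian)
    {u : V → ℝ} (hu : ∑ i, u i = 0) {i : V}
    (hi : hL.eigenvalues i ∉ Set.Icc (mu G 2) (mu G (Fintype.card V))) :
    ⟪hL.eigenvectorBasis i, WithLp.toLp 2 u⟫ = 0 := by
  have hlt : hL.eigenvalues i < mu G 2 := by
    by_contra h
    exact hi ⟨not_lt.1 h, eigenvalues_le_mu_card_s12 G hL i⟩
  refine (isSymmetric_toEuclideanLin_iff.2 hL).inner_eigenvector_eq_zero_of_inner_ker_eq_zero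
    hL.toEuclideanLin_eigenvectorBasis (z := WithLp.toLp 2 fun _ => 1) ?_ ?_ (fun j hj => ?_) ?_
  · rw [toLpLin_toLp, toLin'_apply, G.lapMatrix_mulVec_const_eq_zero, WithLp.toLp_zero]
  · intro h
    simpa using congr_arg (fun x => x i) h
  · exact ((G.posSemidef_lapMatrix ℝ).eigenvalues_nonneg i |>.trans_lt hlt |>.trans_le
      (mu_two_le_eigenvalues_of_lt G hL hlt hj)).ne'
  · simpa [EuclideanSpace.inner_toLp_toLp, dotProduct] using hu

theorem sq_dotProduct_le_of_dotProduct_lapMatrix_mulVec_eq_zero {u v : V → ℝ}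
    (hu : ∑ i, u i = 0) (huv : u ⬝ᵥ (G.lapMatrix ℝ *ᵥ v) = 0) :
    (mu G (Fintype.card V) + mu G 2) ^ 2 * (u ⬝ᵥ v) ^ 2 ≤
      (mu G (Fintype.card V) - mu G 2) ^ 2 * ((u ⬝ᵥ u) * (v ⬝ᵥ v)) := by
  have hL := G.isHermitian_lapMatrix ℝ
  have hmain := (isSymmetric_toEuclideanLin_iff.2 hL).sq_inner_le_of_inner_apply_eq_zero
    hL.toEuclideanLin_eigenvectorBasis
    (fun _ => inner_eigenvectorBasis_eq_zero_of_sum_eq_zero G hL hu) (v := WithLp.toLp 2 v)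
    (by rwa [toLpLin_toLp, toLin'_apply, EuclideanSpace.inner_toLp_toLp, star_trivial,
      dotProduct_comm])
  rw [← real_inner_self_eq_norm_sq, ← real_inner_self_eq_norm_sq] at hmain
  simpa only [EuclideanSpace.inner_toLp_toLp, star_trivial, dotProduct_comm v u,
    add_comm (mu G 2)] using hmain

noncomputable def centeredIndicator (s : Finset V) : V → ℝ :=
  (Fintype.card V : ℝ) • (fun a => if a ∈ s then 1 else 0) - (#s : ℝ) • fun _ => 1

theorem sum_centeredIndicator (s : Finset V) : ∑ a, centeredIndicator s a = 0 := by
  simp [centeredIndicator, Finset.sum_sub_distrib]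
  ring

theorem centeredIndicator_dotProduct (s t : Finset V) :
    centeredIndicator s ⬝ᵥ centeredIndicator t =
      Fintype.card V * (Fintype.card V * #(s ∩ t) - #s * #t) := by
  have hone : ((fun _ => 1 : V → ℝ) ⬝ᵥ fun _ => 1) = Fintype.card V := by simp [dotProduct]
  simp only [centeredIndicator, sub_dotProduct, dotProduct_sub, smul_dotProduct, dotProduct_smul,
    indicator_dotProduct_indicator, indicator_dotProduct_one, one_dotProduct_indicator, hone,
    smul_eq_mul]
  ring

theorem indicator_dotProduct_lapMatrix_mulVec_indicator {R : Type*} [Ring R] {s t : Finset V}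
    (hst : Disjoint s t) (hadj : ∀ x ∈ s, ∀ y ∈ t, ¬ G.Adj x y) :
    ((fun a => if a ∈ s then 1 else 0) ⬝ᵥ
      G.lapMatrix R *ᵥ fun a => if a ∈ t then 1 else 0) = 0 := by
  refine Finset.sum_eq_zero fun a _ => ?_
  by_cases ha : a ∈ s
  · have hnbr : ∀ b ∈ G.neighborFinset a, b ∉ t := fun b hb hbt =>
      hadj a ha b hbt ((G.mem_neighborFinset a b).1 hb)
    simp [G.lapMatrix_mulVec_apply, Finset.disjoint_left.1 hst ha, Finset.sum_ite_of_false hnbr]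
  · simp [ha]

theorem one_dotProduct_lapMatrix_mulVec {R : Type*} [CommRing R] (w : V → R) :
    (fun _ => 1) ⬝ᵥ G.lapMatrix R *ᵥ w = 0 := by
  rw [dotProduct_mulVec, ← mulVec_transpose, G.isSymm_lapMatrix R,
    G.lapMatrix_mulVec_const_eq_zero, zero_dotProduct]

theorem centeredIndicator_dotProduct_lapMatrix_mulVec {s t : Finset V} (hst : Disjoint s t)
    (hadj : ∀ x ∈ s, ∀ y ∈ t, ¬ G.Adj x y) :
    centeredIndicator s ⬝ᵥ G.lapMatrix ℝ *ᵥ centeredIndicator t = 0 := by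
  simp only [centeredIndicator, mulVec_sub, mulVec_smul, G.lapMatrix_mulVec_const_eq_zero,
    smul_zero, sub_zero, dotProduct_smul, sub_dotProduct, smul_dotProduct,
    indicator_dotProduct_lapMatrix_mulVec_indicator G hst hadj, one_dotProduct_lapMatrix_mulVec,
    smul_eq_mul, mul_zero]

theorem card_mul_card_mul_sq_le {s t : Finset V} (hst : Disjoint s t)
    (hadj : ∀ x ∈ s, ∀ y ∈ t, ¬ G.Adj x y) :
    (#s : ℝ) * #t * (mu G (Fintype.card V) + mu G 2) ^ 2 ≤
      (Fintype.card V - #s) * (Fintype.card V - #t) * (mu G (Fintype.card V) - mu G 2) ^ 2 := by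
  have key := sq_dotProduct_le_of_dotProduct_lapMatrix_mulVec_eq_zero G (sum_centeredIndicator s)
    (centeredIndicator_dotProduct_lapMatrix_mulVec G hst hadj)
  rw [centeredIndicator_dotProduct, centeredIndicator_dotProduct, centeredIndicator_dotProduct,
    Finset.disjoint_iff_inter_eq_empty.1 hst, Finset.inter_self, Finset.inter_self,
    Finset.card_empty, Nat.cast_zero] at key
  have hs : (#s : ℝ) ≤ Fintype.card V := by exact_mod_cast Finset.card_le_univ s
  have ht : (#t : ℝ) ≤ Fintype.card V := by exact_mod_cast Finset.card_le_univ t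
  by_cases h0 : (#s : ℝ) * #t = 0
  · rw [h0, zero_mul]
    exact mul_nonneg (mul_nonneg (sub_nonneg.2 hs) (sub_nonneg.2 ht)) (sq_nonneg _)
  · have hpos : 0 < (#s : ℝ) * #t := lt_of_le_of_ne (by positivity) (Ne.symm h0)
    have hN : (0 : ℝ) < Fintype.card V := by nlinarith
    refine le_of_mul_le_mul_right ?_ (by positivity : 0 < (Fintype.card V : ℝ) ^ 2 * (#s * #t))
    linarith [key]

end Paper

open Paper in
theorem haemers_separation_general {n : ℕ} (G : SimpleGraph (Fin n))
    (X Y : Set (Fin n)) (hdisj : Disjoint X Y)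
    (hNoEdge : ∀ x ∈ X, ∀ y ∈ Y, ¬ G.Adj x y) :
    (X.ncard : ℝ) * (Y.ncard : ℝ) * (mu G n + mu G 2) ^ 2
      ≤ ((n : ℝ) - X.ncard) * ((n : ℝ) - Y.ncard) * (mu G n - mu G 2) ^ 2 := by
  classical
  simpa [Set.ncard_eq_toFinset_card'] using
    card_mul_card_mul_sq_le G (s := X.toFinset) (t := Y.toFinset) (by simpa using hdisj)
      (by simpa using hNoEdge)

open Paper in
/-- Haemers separation inequality. -/
theorem haemers_separation {n : ℕ} (G : SimpleGraph (Fin n)) (hE : G.edgeSet.Nonempty)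
    (X Y : Set (Fin n)) (hdisj : Disjoint X Y)
    (hNoEdge : ∀ x ∈ X, ∀ y ∈ Y, ¬ G.Adj x y) :
    (X.ncard : ℝ) * (Y.ncard : ℝ) * (mu G n + mu G 2) ^ 2
      ≤ ((n : ℝ) - X.ncard) * ((n : ℝ) - Y.ncard) * (mu G n - mu G 2) ^ 2 :=
  haemers_separation_general G X Y hdisj hNoEdge
end
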